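/- arXiv:1103.6095 — 5 statements merged into one kernel-verified Lean document; each statement's English description precedes it below -/
import Mathlib

section
/- For any two connected graphs G and H, the vertex connectivity of the Cartesian product satisfies κ(G □ H) ≥ κ(G) + κ(H). -/
/-!
Let `S` separate two vertices of `G □ H` and let `C` be the component of one of them. A column
`{u} × V(H)` meeting `S` in fewer than `κ(H)` vertices stays connected once `S` is deleted, so `C`
does not cut it; likewise for rows and `κ(G)`. If no row is cut, every column meets `S`, and either
some column is cut, costing `κ(H)` vertices, or two columns together meet every row; either way
`|S| ≥ |V(G)| - 1 + κ(H) ≥ κ(G) + κ(H)`. If both a column `u₀` and a row `v₀` are cut and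
`|S| < κ(G) + κ(H)`, counting forces `S` into the cross through `(u₀, v₀)`; then an `S`-free row
and an `S`-free column link every remaining vertex, so nothing is cut after all.
-/

open SimpleGraph

variable {V : Type*}

/-- `T` is an `S`-tree in `G`: a subgraph containing `S` that is a tree. -/
def IsSTree (G : SimpleGraph V) (S : Set V) (T : G.Subgraph) : Prop :=
  S ⊆ T.verts ∧ T.coe.IsTree

/-- A family of `S`-trees is pairwise internally disjoint. -/
def PairwiseInternallyDisjoint (G : SimpleGraph V) (S : Set V) {r : ℕ}
    (T : Fin r → G.Subgraph) : Prop :=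
  ∀ i j, i ≠ j → (T i).verts ∩ (T j).verts = S ∧ Disjoint (T i).edgeSet (T j).edgeSet

/-- `κ(S)`: the greatest number of pairwise internally disjoint `S`-trees. -/
noncomputable def treeConn (G : SimpleGraph V) (S : Set V) : ℕ :=
  sSup {r | ∃ T : Fin r → G.Subgraph,
    (∀ i, IsSTree G S (T i)) ∧ PairwiseInternallyDisjoint G S T}

/-- The generalized `k`-connectivity `κ_k(G)`. -/
noncomputable def gkConn (G : SimpleGraph V) (k : ℕ) : ℕ :=
  sInf {r | ∃ S : Finset V, S.card = k ∧ treeConn G ↑S = r}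

/-- The vertex connectivity `κ(G)`: minimum size of a set of vertices whose
removal leaves a disconnected or trivial graph. -/
noncomputable def vertConn [Fintype V] (G : SimpleGraph V) : ℕ :=
  sInf {n | ∃ S : Finset V, S.card = n ∧
    (¬ ((⊤ : G.Subgraph).deleteVerts ↑S).coe.Connected ∨ Fintype.card V - S.card ≤ 1)}

open Finset

section Grid

variable {α β : Type*} (S : Finset (α × β)) (C : Set (α × β))

def transpose : Finset (β × α) := S.map (Equiv.prodComm α β).toEmbedding

def UncutCol (u : α) : Prop :=
  ∀ p q, (u, p) ∉ S → (u, q) ∉ S → ((u, p) ∈ C ↔ (u, q) ∈ C)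

def UncutRow (v : β) : Prop :=
  ∀ p q, (p, v) ∉ S → (q, v) ∉ S → ((p, v) ∈ C ↔ (q, v) ∈ C)

variable {C}

@[simp] lemma mem_transpose {z : β × α} : z ∈ transpose S ↔ z.swap ∈ S := by
  simp [transpose, mem_map_equiv]

lemma card_transpose : #(transpose S) = #S := card_map _

lemma uncutCol_transpose {v : β} : UncutCol (transpose S) (Prod.swap ⁻¹' C) v ↔ UncutRow S C v := by
  simp [UncutCol, UncutRow]

lemma uncutRow_transpose {u : α} : UncutRow (transpose S) (Prod.swap ⁻¹' C) u ↔ UncutCol S C u := by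
  simp [UncutCol, UncutRow]

variable [DecidableEq α] [DecidableEq β]

def colSlice (u : α) : Finset β := (S.filter (·.1 = u)).image Prod.snd

def rowSlice (v : β) : Finset α := (S.filter (·.2 = v)).image Prod.fst

@[simp] lemma mem_colSlice {u : α} {v : β} : v ∈ colSlice S u ↔ (u, v) ∈ S := by
  simp [colSlice]

@[simp] lemma mem_rowSlice {u : α} {v : β} : u ∈ rowSlice S v ↔ (u, v) ∈ S := by
  simp [rowSlice]

lemma colSlice_eq_empty {u : α} : colSlice S u = ∅ ↔ ∀ v, (u, v) ∉ S := by
  simp [eq_empty_iff_forall_notMem]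

lemma rowSlice_eq_empty {v : β} : rowSlice S v = ∅ ↔ ∀ u, (u, v) ∉ S := by
  simp [eq_empty_iff_forall_notMem]

lemma colSlice_transpose : colSlice (transpose S) = rowSlice S := by
  ext
  simp

lemma rowSlice_transpose : rowSlice (transpose S) = colSlice S := by
  ext
  simp

lemma card_colSlice (u : α) : #(colSlice S u) = #(S.filter (·.1 = u)) :=
  card_image_of_injOn fun _ hz _ hw h => Prod.ext
    ((mem_filter.1 hz).2.trans (mem_filter.1 hw).2.symm) h

lemma card_rowSlice (v : β) : #(rowSlice S v) = #(S.filter (·.2 = v)) :=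
  card_image_of_injOn fun _ hz _ hw h => Prod.ext h
    ((mem_filter.1 hz).2.trans (mem_filter.1 hw).2.symm)

lemma card_colSlice_add_card_rowSlice (u : α) (v : β) :
    #(colSlice S u) + #(rowSlice S v) + #(S.filter fun z => z.1 ≠ u ∧ z.2 ≠ v) =
      #S + if (u, v) ∈ S then 1 else 0 := by
  have hsplit := card_filter_add_card_filter_not (s := S) (fun z => z.1 = u ∨ z.2 = v)
  have hunion := card_union_add_card_inter (S.filter (·.1 = u)) (S.filter (·.2 = v))
  rw [← filter_or, ← filter_and] at hunion
  have hinter : S.filter (fun z => z.1 = u ∧ z.2 = v) = S.filter (· = (u, v)) := by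
    ext z
    simp [Prod.ext_iff]
  rw [hinter, filter_eq'] at hunion
  simp only [not_or, ← ne_eq] at hsplit
  rw [card_colSlice, card_rowSlice]
  split_ifs at hunion ⊢ <;> simp only [card_singleton, card_empty] at hunion <;> omega

lemma mem_iff_mem_of_subset_cross {k l : ℕ}
    (hcol : ∀ u, #(colSlice S u) < max l 1 → UncutCol S C u)
    (hrow : ∀ v, #(rowSlice S v) < max k 1 → UncutRow S C v)
    {u₀ : α} {v₀ : β} (h₀ : (u₀, v₀) ∈ S) (hcross : ∀ z ∈ S, z.1 = u₀ ∨ z.2 = v₀)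
    (hk : #(rowSlice S v₀) ≤ k) {x₀ : α} (hx₀ : (x₀, v₀) ∉ S) {y₀ : β} (hy₀ : (u₀, y₀) ∉ S)
    {z w : α × β} (hz : z ∉ S) (hw : w ∉ S) : z ∈ C ↔ w ∈ C := by
  have hx₀col : ∀ b, (x₀, b) ∉ S := fun b hb => by
    rcases hcross _ hb with h | h <;> simp_all
  have hy₀row : ∀ a, (a, y₀) ∉ S := fun a ha => by
    rcases hcross _ ha with h | h <;> simp_all
  have hx₀uncut := hcol x₀ (by simp [(colSlice_eq_empty S).2 hx₀col])
  have hy₀uncut := hrow y₀ (by simp [(rowSlice_eq_empty S).2 hy₀row])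
  suffices key : ∀ a b, (a, b) ∉ S → ((a, b) ∈ C ↔ (x₀, y₀) ∈ C) from
    (key _ _ hz).trans (key _ _ hw).symm
  intro a b hab
  by_cases hav : (a, v₀) ∈ S
  · refine ((hrow b ?_) a x₀ hab (hx₀col b)).trans (hx₀uncut b y₀ (hx₀col b) (hx₀col y₀))
    have hbv : b ≠ v₀ := by rintro rfl; exact hab hav
    have hsub : rowSlice S b ⊆ {u₀} := fun p hp => by
      simpa [hbv] using hcross _ ((mem_rowSlice S).1 hp)
    by_cases hau : a = u₀
    · subst hau
      have : rowSlice S b = ∅ := subset_singleton_iff.1 hsub |>.resolve_right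
        (fun h => hab ((mem_rowSlice S).1 (h ▸ mem_singleton_self a)))
      simp [this]
    · have h2 : 2 ≤ #(rowSlice S v₀) :=
        one_lt_card.2 ⟨u₀, by simpa using h₀, a, by simpa using hav, Ne.symm hau⟩
      have := card_le_card hsub
      simp only [card_singleton] at this
      omega
  · refine ((hcol a ?_) b y₀ hab (hy₀row a)).trans (hy₀uncut a x₀ (hy₀row a) (hy₀row x₀))
    have : colSlice S a = ∅ := eq_empty_of_forall_notMem fun b hb => by
      rcases hcross _ ((mem_colSlice S).1 hb) with h | h
      · obtain rfl : a = u₀ := h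
        exact hav h₀
      · obtain rfl : b = v₀ := h
        exact hav ((mem_colSlice S).1 hb)
    simp [this]

variable [Fintype α]

lemma card_eq_sum_card_colSlice : #S = ∑ u, #(colSlice S u) := by
  rw [card_eq_sum_card_fiberwise (f := Prod.fst) (t := univ) (fun _ _ => mem_univ _)]
  simp only [card_colSlice]

lemma sum_add_card_sub_le_card (s : Finset α) (hne : ∀ u, (colSlice S u).Nonempty) :
    ∑ u ∈ s, #(colSlice S u) + (Fintype.card α - #s) ≤ #S := by
  have hrest : #(univ \ s) • 1 ≤ ∑ u ∈ univ \ s, #(colSlice S u) :=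
    card_nsmul_le_sum _ _ _ fun u _ => (hne u).card_pos
  rw [smul_eq_mul, mul_one, card_sdiff_of_subset (subset_univ s), card_univ] at hrest
  rw [card_eq_sum_card_colSlice, ← sum_sdiff (subset_univ s)]
  omega

variable [Fintype β]

lemma card_sub_one_add_le_card_of_forall_uncutRow {l : ℕ} (hl : l < Fintype.card β)
    (hcol : ∀ u, #(colSlice S u) < max l 1 → UncutCol S C u) (hrow : ∀ v, UncutRow S C v)
    {x y : α × β} (hxS : x ∉ S) (hyS : y ∉ S) (hx : x ∈ C) (hy : y ∉ C) :
    Fintype.card α - 1 + l ≤ #S := by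
  obtain ⟨a, b⟩ := x
  obtain ⟨c, d⟩ := y
  have hne : ∀ u, (colSlice S u).Nonempty := by
    intro u
    by_contra h
    rw [not_nonempty_iff_eq_empty] at h
    have hfree := (colSlice_eq_empty S).1 h
    refine hy ((hrow d c u hyS (hfree d)).2 ?_)
    exact (hcol u (by simp [h]) b d (hfree b) (hfree d)).1 ((hrow b a u hxS (hfree b)).1 hx)
  by_cases hc : ∀ u, UncutCol S C u
  · have hac : a ≠ c := by
      rintro rfl
      exact hy ((hc a b d hxS hyS).1 hx)
    have hcover : univ ⊆ colSlice S a ∪ colSlice S c := by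
      intro w _
      by_contra h
      simp only [mem_union, mem_colSlice, not_or] at h
      exact hy ((hc c w d h.2 hyS).1 ((hrow w a c h.1 h.2).1 ((hc a b w hxS h.1).1 hx)))
    have hβ := (card_le_card hcover).trans (card_union_le _ _)
    have hsum := sum_add_card_sub_le_card S {a, c} hne
    rw [sum_pair hac, card_pair hac] at hsum
    rw [card_univ] at hβ
    omega
  · push Not at hc
    obtain ⟨u₀, hu₀⟩ := hc
    have hcut := not_lt.mp (mt (hcol u₀) hu₀)
    have hsum := sum_add_card_sub_le_card S {u₀} hne
    rw [sum_singleton, card_singleton] at hsum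
    omega

lemma add_le_card_of_not_uncutCol_of_not_uncutRow {k l : ℕ}
    (hk : k < Fintype.card α) (hl : l < Fintype.card β)
    (hcol : ∀ u, #(colSlice S u) < max l 1 → UncutCol S C u)
    (hrow : ∀ v, #(rowSlice S v) < max k 1 → UncutRow S C v)
    {u₀ : α} (hu₀ : ¬ UncutCol S C u₀) {v₀ : β} (hv₀ : ¬ UncutRow S C v₀) : k + l ≤ #S := by
  have hcu := not_lt.mp (mt (hcol u₀) hu₀)
  have hrv := not_lt.mp (mt (hrow v₀) hv₀)
  have hcount := card_colSlice_add_card_rowSlice S u₀ v₀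
  by_contra hlt
  have h₀ : (u₀, v₀) ∈ S := by
    by_contra h
    rw [if_neg h] at hcount
    omega
  rw [if_pos h₀] at hcount
  have hcross : ∀ z ∈ S, z.1 = u₀ ∨ z.2 = v₀ := by
    have hoff : S.filter (fun z => z.1 ≠ u₀ ∧ z.2 ≠ v₀) = ∅ := card_eq_zero.1 (by omega)
    intro z hz
    by_contra h
    push Not at h
    exact (filter_eq_empty_iff.1 hoff) hz h
  obtain ⟨x₀, -, hx₀⟩ := exists_mem_notMem_of_card_lt_card (s := rowSlice S v₀) (t := univ)
    (by rw [card_univ]; omega)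
  obtain ⟨y₀, -, hy₀⟩ := exists_mem_notMem_of_card_lt_card (s := colSlice S u₀) (t := univ)
    (by rw [card_univ]; omega)
  exact hu₀ fun p q hp hq => mem_iff_mem_of_subset_cross S hcol hrow h₀ hcross (by omega)
    ((mem_rowSlice S).not.1 hx₀) ((mem_colSlice S).not.1 hy₀) hp hq

theorem add_le_card_of_mem_of_notMem {k l : ℕ} (hk : k < Fintype.card α) (hl : l < Fintype.card β)
    (hcol : ∀ u, #(colSlice S u) < max l 1 → UncutCol S C u)
    (hrow : ∀ v, #(rowSlice S v) < max k 1 → UncutRow S C v)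
    {x y : α × β} (hxS : x ∉ S) (hyS : y ∉ S) (hx : x ∈ C) (hy : y ∉ C) : k + l ≤ #S := by
  by_cases hr : ∀ v, UncutRow S C v
  · have := card_sub_one_add_le_card_of_forall_uncutRow S hl hcol hr hxS hyS hx hy
    omega
  by_cases hc : ∀ u, UncutCol S C u
  · have := card_sub_one_add_le_card_of_forall_uncutRow (transpose S) (C := Prod.swap ⁻¹' C) hk
      (by simpa only [colSlice_transpose, uncutCol_transpose] using hrow)
      (by simpa only [uncutRow_transpose] using hc)
      (x := x.swap) (y := y.swap) (by simpa using hxS) (by simpa using hyS) (by simpa using hx)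
      (by simpa using hy)
    rw [card_transpose] at this
    omega
  push Not at hr hc
  obtain ⟨u₀, hu₀⟩ := hc
  obtain ⟨v₀, hv₀⟩ := hr
  exact add_le_card_of_not_uncutCol_of_not_uncutRow S hk hl hcol hrow hu₀ hv₀

end Grid

section VertConn

variable [Fintype V] {G : SimpleGraph V}

lemma vertConn_le_card {S : Finset V}
    (h : ¬ ((⊤ : G.Subgraph).deleteVerts ↑S).coe.Connected ∨ Fintype.card V - #S ≤ 1) :
    vertConn G ≤ #S :=
  Nat.sInf_le ⟨S, rfl, h⟩

lemma vertConn_lt_card [Nonempty V] (G : SimpleGraph V) : vertConn G < Fintype.card V := by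
  classical
  obtain ⟨v⟩ := ‹Nonempty V›
  have hcard : #(univ.erase v) = Fintype.card V - 1 := by
    rw [card_erase_of_mem (mem_univ v), card_univ]
  have := vertConn_le_card (G := G) (S := univ.erase v) (Or.inr (by omega))
  have := Fintype.card_pos (α := V)
  omega

-- `max _ 1`: deleting no vertex keeps `G` connected even when `vertConn G = 0`, i.e. `G` is a
-- single vertex.
lemma connected_deleteVerts_of_card_lt (hG : G.Connected) {T : Finset V}
    (hT : #T < max (vertConn G) 1) : ((⊤ : G.Subgraph).deleteVerts ↑T).coe.Connected := by
  rcases T.eq_empty_or_nonempty with rfl | hne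
  · rw [coe_empty, Subgraph.deleteVerts_empty]
    exact Subgraph.topIso.connected_iff.2 hG
  · by_contra hdisc
    have := vertConn_le_card (Or.inl hdisc)
    have := hne.card_pos
    omega

end VertConn

lemma SimpleGraph.Preconnected.reachable_deleteVerts_map {W W' : Type*} {H : SimpleGraph W}
    {K : SimpleGraph W'} {T' : Set W} (hT : ((⊤ : H.Subgraph).deleteVerts T').coe.Preconnected)
    (φ : H →g K) {T : Set W'} (hT' : ∀ w, w ∈ T' ↔ φ w ∈ T) {p q : W} (hp : φ p ∉ T)
    (hq : φ q ∉ T) :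
    ((⊤ : K.Subgraph).deleteVerts T).coe.Reachable ⟨φ p, trivial, hp⟩ ⟨φ q, trivial, hq⟩ := by
  let ψ : ((⊤ : H.Subgraph).deleteVerts T').coe →g ((⊤ : K.Subgraph).deleteVerts T).coe :=
    { toFun := fun w => ⟨φ w, trivial, (hT' w).not.1 w.2.2⟩
      map_rel' := fun {a b} h => by
        simp only [Subgraph.coe_adj, Subgraph.deleteVerts_adj, Subgraph.top_adj] at h ⊢
        exact ⟨trivial, (hT' a).not.1 a.2.2, trivial, (hT' b).not.1 b.2.2, φ.map_rel h.2.2.2.2⟩ }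
  exact (hT ⟨p, trivial, (hT' p).not.2 hp⟩ ⟨q, trivial, (hT' q).not.2 hq⟩).map ψ

section Product

variable {α β : Type*} [Fintype α] [Fintype β]

lemma vertConn_add_vertConn_lt_card_mul [Nonempty α] [Nonempty β]
    (G : SimpleGraph α) (H : SimpleGraph β) :
    vertConn G + vertConn H < Fintype.card α * Fintype.card β := by
  have hG := vertConn_lt_card G
  have hH := vertConn_lt_card H
  nlinarith

variable [DecidableEq α] [DecidableEq β] {G : SimpleGraph α} {H : SimpleGraph β}

lemma vertConn_add_vertConn_le_of_not_reachable (hG : G.Connected) (hH : H.Connected)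
    (S : Finset (α × β)) {x y : ((⊤ : (G □ H).Subgraph).deleteVerts ↑S).verts}
    (hxy : ¬ ((⊤ : (G □ H).Subgraph).deleteVerts ↑S).coe.Reachable x y) :
    vertConn G + vertConn H ≤ #S := by
  let K := ((⊤ : (G □ H).Subgraph).deleteVerts ↑S).coe
  let C : Set (α × β) := {z | ∃ hz : z ∉ S, K.Reachable x ⟨z, trivial, hz⟩}
  have hC : ∀ {z w} (hz : z ∉ S) (hw : w ∉ S),
      K.Reachable ⟨z, trivial, hz⟩ ⟨w, trivial, hw⟩ → (z ∈ C ↔ w ∈ C) :=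
    fun hz hw r => ⟨fun ⟨_, h⟩ => ⟨hw, h.trans r⟩, fun ⟨_, h⟩ => ⟨hz, h.trans r.symm⟩⟩
  have := hG.nonempty
  have := hH.nonempty
  refine add_le_card_of_mem_of_notMem S (C := C) (x := x.1) (y := y.1)
    (vertConn_lt_card G) (vertConn_lt_card H)
    (fun u hu p q hp hq => hC hp hq ?_) (fun v hv p q hp hq => hC hp hq ?_)
    x.2.2 y.2.2 ⟨x.2.2, Reachable.refl _⟩ fun ⟨_, h⟩ => hxy h
  · exact (connected_deleteVerts_of_card_lt hH hu).preconnected.reachable_deleteVerts_map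
      (G.boxProdRight H u).toHom (fun w => by simp) hp hq
  · exact (connected_deleteVerts_of_card_lt hG hv).preconnected.reachable_deleteVerts_map
      (G.boxProdLeft H v).toHom (fun w => by simp) hp hq

end Product

theorem stmt0 {α β : Type*} [Fintype α] [Fintype β]
    (G : SimpleGraph α) (H : SimpleGraph β)
    (hG : G.Connected) (hH : H.Connected) :
    vertConn G + vertConn H ≤ vertConn (G □ H) := by
  classical
  have := hG.nonempty
  have := hH.nonempty
  refine le_csInf ⟨_, univ, rfl, Or.inr (by simp)⟩ ?_
  rintro _ ⟨S, rfl, hS⟩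
  by_contra! hlt
  have hsmall := vertConn_add_vertConn_lt_card_mul G H
  obtain ⟨z, -, hz⟩ := exists_mem_notMem_of_card_lt_card (s := S) (t := univ)
    (by rw [card_univ, Fintype.card_prod]; omega)
  have hdisc := hS.resolve_right (by rw [Fintype.card_prod]; omega)
  have : Nonempty ((⊤ : (G □ H).Subgraph).deleteVerts ↑S).verts := ⟨⟨z, trivial, hz⟩⟩
  obtain ⟨x, y, hxy⟩ : ∃ x y, ¬ ((⊤ : (G □ H).Subgraph).deleteVerts ↑S).coe.Reachable x y := by
    by_contra! h
    exact hdisc ⟨h⟩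
  exact hlt.not_ge (vertConn_add_vertConn_le_of_not_reachable hG hH S hxy)
end

section
/- For every two integers n and k with 2 ≤ k ≤ n, the generalized k-connectivity of the complete graph K_n equals n − ⌈k/2⌉. -/
/-!
Fix `S ⊆ V(K_n)` with `|S| = k`. Upper bound: in a family of internally disjoint `S`-trees, each
tree leaving `S` owns a vertex outside `S` that no other tree uses, so there are at most `n - k`
of them; each tree inside `S` uses `k - 1` of the `k(k-1)/2` edges of `K_S`, so there are at most
`⌊k/2⌋` of them. Lower bound: the `n - k` stars joining a vertex outside `S` to all of `S`,
together with `⌊k/2⌋` edge-disjoint Hamiltonian paths of `K_S` (Walecki's zigzag construction).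
-/

open SimpleGraph

variable {V : Type*}

section Walecki

/-- The offsets `0, 1, -1, 2, -2, …, m` modulo `2m`, represented in `[1, 2m]` to stay in `ℕ`. -/
def zigzag (m u : ℕ) : ℕ := if u % 2 = 0 then 2 * m - u / 2 else u / 2 + 1

lemma zigzag_mem_Icc {m u : ℕ} (hu : u < 2 * m) : 1 ≤ zigzag m u ∧ zigzag m u ≤ 2 * m := by
  unfold zigzag; split_ifs <;> omega

lemma zigzag_injOn {m u v : ℕ} (hu : u < 2 * m) (hv : v < 2 * m) (h : zigzag m u = zigzag m v) :
    u = v := by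
  unfold zigzag at h; split_ifs at h <;> omega

lemma zigzag_add_zigzag_succ (m u : ℕ) (hu : u + 1 < 2 * m) :
    zigzag m u + zigzag m (u + 1) = 2 * m + (u + 1) % 2 := by
  unfold zigzag; split_ifs <;> omega

/-- The `i`-th path of Walecki's decomposition of `K_k` on `{0, …, k-1}`: with `m = k / 2` it
zigzags `i, i+1, i-1, i+2, …, i+m` around `ℤ/2m` and, for odd `k`, ends at the extra vertex `2m`.
Consecutive zigzag vertices sum to `2i` or `2i+1` modulo `2m`, so every edge determines `i`. -/
def walecki (k i t : ℕ) : ℕ :=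
  if t < 2 * (k / 2) then (i + zigzag (k / 2) t) % (2 * (k / 2)) else 2 * (k / 2)

variable {k i t : ℕ}

lemma walecki_lt (ht : t < k) : walecki k i t < k := by
  unfold walecki
  split_ifs with h
  · exact (Nat.mod_lt _ (by omega)).trans_le (by omega)
  · omega

lemma walecki_injOn : Set.InjOn (walecki k i) (Set.Iio k) := by
  intro t ht u hu h
  simp only [Set.mem_Iio] at ht hu
  unfold walecki at h
  split_ifs at h with htk huk
  · have hmod : zigzag (k / 2) t ≡ zigzag (k / 2) u [MOD 2 * (k / 2)] :=
      Nat.ModEq.add_left_cancel' i h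
    have := zigzag_mem_Icc htk
    have := zigzag_mem_Icc huk
    refine zigzag_injOn htk huk (hmod.eq_of_abs_lt ?_)
    rw [abs_sub_lt_iff]; omega
  · exact absurd h (Nat.mod_lt _ (by omega)).ne
  · exact absurd h.symm (Nat.mod_lt _ (by omega)).ne
  · omega

lemma walecki_edge (hi : i < k / 2) (ht : t + 1 < k) :
    (walecki k i t < 2 * (k / 2) ∧ walecki k i (t + 1) < 2 * (k / 2) ∧
      (walecki k i t + walecki k i (t + 1)) % (2 * (k / 2)) = 2 * i + (t + 1) % 2) ∨
    (walecki k i t = i + k / 2 ∧ walecki k i (t + 1) = 2 * (k / 2)) := by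
  unfold walecki
  by_cases htk : t + 1 < 2 * (k / 2)
  · left
    rw [if_pos (by omega), if_pos htk]
    refine ⟨Nat.mod_lt _ (by omega), Nat.mod_lt _ (by omega), ?_⟩
    rw [← Nat.add_mod, show i + zigzag (k / 2) t + (i + zigzag (k / 2) (t + 1)) =
      2 * i + (t + 1) % 2 + 2 * (k / 2) by have := zigzag_add_zigzag_succ (k / 2) t htk; omega,
      Nat.add_mod_right, Nat.mod_eq_of_lt (by omega)]
  · right
    rw [if_pos (by omega), if_neg htk]
    refine ⟨?_, rfl⟩
    rw [Nat.mod_eq_of_lt] <;> unfold zigzag <;> split_ifs <;> omega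

lemma walecki_edge_ne {j u : ℕ} (hi : i < k / 2) (hj : j < k / 2) (hij : i ≠ j) (ht : t + 1 < k)
    (hu : u + 1 < k) :
    s(walecki k i t, walecki k i (t + 1)) ≠ s(walecki k j u, walecki k j (u + 1)) := by
  rw [Ne, Sym2.eq_iff]
  rcases walecki_edge hi ht with ⟨hlt₁, hlt₂, hmod⟩ | ⟨heq₁, heq₂⟩ <;>
    rcases walecki_edge hj hu with ⟨hlt₁', hlt₂', hmod'⟩ | ⟨heq₁', heq₂'⟩
  · intro h
    have hsum : walecki k i t + walecki k i (t + 1) = walecki k j u + walecki k j (u + 1) := by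
      omega
    rw [hsum] at hmod
    omega
  all_goals omega

def waleckiEmbedding (k i : ℕ) : Fin k ↪ Fin k :=
  ⟨fun t ↦ ⟨walecki k i t, walecki_lt t.2⟩,
    fun t u h ↦ Fin.ext (walecki_injOn t.2 u.2 (congrArg Fin.val h))⟩

@[simp]
lemma val_waleckiEmbedding (k i : ℕ) (t : Fin k) : (waleckiEmbedding k i t : ℕ) = walecki k i t :=
  rfl

end Walecki

namespace SimpleGraph

variable {α β : Type*}

def Copy.toTop (A : SimpleGraph α) (f : α ↪ β) : Copy A (⊤ : SimpleGraph β) :=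
  ⟨⟨f, fun h ↦ f.injective.ne h.ne⟩, f.injective⟩

@[simp]
lemma Copy.coe_toTop (A : SimpleGraph α) (f : α ↪ β) : ⇑(Copy.toTop A f) = f :=
  rfl

namespace Copy

variable {A : SimpleGraph α} {B : SimpleGraph β} (f : Copy A B)

lemma toSubgraph_verts : f.toSubgraph.verts = Set.range f := by
  simp [toSubgraph]

lemma toSubgraph_edgeSet : f.toSubgraph.edgeSet = Sym2.map f '' A.edgeSet := by
  simp [toSubgraph]

lemma isTree_coe_toSubgraph (hA : A.IsTree) : f.toSubgraph.coe.IsTree :=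
  f.isoToSubgraph.isTree_iff.mp hA

end Copy

namespace Subgraph

variable {G : SimpleGraph V} (H : G.Subgraph)

lemma ncard_edgeSet_coe : H.coe.edgeSet.ncard = H.edgeSet.ncard := by
  rw [← H.image_coe_edgeSet_coe,
    Set.ncard_image_of_injective _ (Sym2.map.injective Subtype.val_injective)]

lemma ncard_edgeSet_add_one_of_isTree [Finite H.verts] (h : H.coe.IsTree) :
    H.edgeSet.ncard + 1 = H.verts.ncard := by
  have := (isTree_iff_connected_and_card.mp h).2
  rwa [Nat.card_coe_set_eq, Nat.card_coe_set_eq, ncard_edgeSet_coe] at this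

lemma ncard_edgeSet_le_choose_two [Finite H.verts] :
    H.edgeSet.ncard ≤ H.verts.ncard.choose 2 := by
  classical
  have := Fintype.ofFinite H.verts
  rw [← ncard_edgeSet_coe, Set.ncard_eq_toFinset_card', ← Nat.card_coe_set_eq,
    Nat.card_eq_fintype_card]
  exact card_edgeFinset_le_card_choose_two

lemma disjoint_edgeSet_of_forall_mem {H₁ H₂ : G.Subgraph} {v : V} (h₁ : ∀ e ∈ H₁.edgeSet, v ∈ e)
    (h₂ : v ∉ H₂.verts) : Disjoint H₁.edgeSet H₂.edgeSet :=
  Set.disjoint_left.mpr fun e he₁ he₂ ↦ h₂ (H₂.mem_verts_of_mem_edge he₂ (h₁ e he₁))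

end Subgraph

lemma edgeSet_pathGraph (n : ℕ) :
    (pathGraph (n + 1)).edgeSet = Set.range fun t : Fin n ↦ s(t.castSucc, t.succ) := by
  ext e
  induction e using Sym2.ind with
  | _ x y =>
  simp only [mem_edgeSet, pathGraph_adj, Set.mem_range, Sym2.eq_iff, Fin.ext_iff,
    Fin.val_castSucc, Fin.val_succ]
  constructor
  · rintro (h | h)
    · exact ⟨⟨x, by omega⟩, Or.inl ⟨rfl, h⟩⟩
    · exact ⟨⟨y, by omega⟩, Or.inr ⟨rfl, h⟩⟩
  · rintro ⟨t, ⟨h₁, h₂⟩ | ⟨h₁, h₂⟩⟩ <;> omega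

lemma isTree_pathGraph {n : ℕ} (hn : n ≠ 0) : (pathGraph n).IsTree := by
  obtain ⟨n, rfl⟩ := Nat.exists_eq_succ_of_ne_zero hn
  refine isTree_iff_connected_and_card.mpr ⟨pathGraph_connected n, ?_⟩
  have hinj : Function.Injective fun t : Fin n ↦ s(t.castSucc, t.succ) := by
    intro a b h
    simp only [Sym2.eq_iff, Fin.ext_iff, Fin.val_castSucc, Fin.val_succ] at h
    omega
  rw [edgeSet_pathGraph, Nat.card_range_of_injective hinj, Nat.card_fin, Nat.card_fin]

def starSubgraph {W : Set V} (c : W) : (⊤ : SimpleGraph V).Subgraph :=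
  (Copy.toTop (starGraph c) (Function.Embedding.subtype (· ∈ W))).toSubgraph

lemma starSubgraph_verts {W : Set V} (c : W) : (starSubgraph c).verts = W := by
  simp [starSubgraph, Copy.toTop]

lemma isTree_coe_starSubgraph {W : Set V} (c : W) : (starSubgraph c).coe.IsTree :=
  Copy.isTree_coe_toSubgraph _ (isTree_starGraph c)

lemma mem_of_mem_edgeSet_starSubgraph {W : Set V} (c : W) {e : Sym2 V}
    (he : e ∈ (starSubgraph c).edgeSet) : ↑c ∈ e := by
  rw [starSubgraph, Copy.toSubgraph_edgeSet] at he
  obtain ⟨e, he, rfl⟩ := he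
  induction e using Sym2.ind with
  | _ x y =>
  rw [mem_edgeSet, starGraph_adj] at he
  rcases he.2 with rfl | rfl <;> simp [Copy.toTop]

theorem exists_pairwise_disjoint_pathGraph_embeddings (k : ℕ) :
    ∃ σ : Fin (k / 2) → (Fin k ↪ Fin k), Pairwise fun i j ↦
      Disjoint (Sym2.map (σ i) '' (pathGraph k).edgeSet)
        (Sym2.map (σ j) '' (pathGraph k).edgeSet) := by
  refine ⟨fun i ↦ waleckiEmbedding k i, fun i j hij ↦ ?_⟩
  obtain ⟨n, rfl⟩ : ∃ n, k = n + 1 := ⟨k - 1, by have := i.2; omega⟩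
  rw [edgeSet_pathGraph, Set.disjoint_left]
  rintro _ ⟨_, ⟨t, rfl⟩, rfl⟩ ⟨_, ⟨u, rfl⟩, h⟩
  refine walecki_edge_ne (t := u) (u := t) j.2 i.2 (Fin.val_injective.ne hij.symm) (by omega)
    (by omega) ?_
  simpa using congrArg (Sym2.map Fin.val) h

theorem exists_edgeDisjoint_trees_with_verts_eq (S : Finset V) :
    ∃ P : Fin (S.card / 2) → (⊤ : SimpleGraph V).Subgraph,
      (∀ i, (P i).verts = S ∧ (P i).coe.IsTree) ∧
        Pairwise fun i j ↦ Disjoint (P i).edgeSet (P j).edgeSet := by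
  obtain ⟨σ, hσ⟩ := exists_pairwise_disjoint_pathGraph_embeddings S.card
  obtain ⟨e, he⟩ : ∃ e : Fin S.card ↪ V, Set.range e = S :=
    ⟨S.equivFin.symm.toEmbedding.trans (Function.Embedding.subtype _),
      by simp [Function.Embedding.coe_trans, Set.range_comp]⟩
  refine ⟨fun i ↦ (Copy.toTop (pathGraph S.card) ((σ i).trans e)).toSubgraph,
    fun i ↦ ⟨?_, Copy.isTree_coe_toSubgraph _ (isTree_pathGraph (by have := i.2; omega))⟩,
    fun i j hij ↦ ?_⟩
  · have hσ : Function.Surjective (σ i) := Finite.injective_iff_surjective.mp (σ i).injective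
    rw [Copy.toSubgraph_verts, Copy.coe_toTop, Function.Embedding.coe_trans, Set.range_comp,
      hσ.range_eq, Set.image_univ, he]
  · dsimp only
    rw [Copy.toSubgraph_edgeSet, Copy.toSubgraph_edgeSet, Copy.coe_toTop, Copy.coe_toTop,
      Function.Embedding.coe_trans, Function.Embedding.coe_trans, Sym2.map_comp, Sym2.map_comp,
      Set.image_comp, Set.image_comp, Set.disjoint_image_iff (Sym2.map.injective e.injective)]
    exact hσ hij

end SimpleGraph

open SimpleGraph

variable {ι κ : Type*}

def InternallyDisjoint {G : SimpleGraph V} (S : Set V) (H₁ H₂ : G.Subgraph) : Prop :=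
  H₁.verts ∩ H₂.verts = S ∧ Disjoint H₁.edgeSet H₂.edgeSet

lemma InternallyDisjoint.symm {G : SimpleGraph V} {S : Set V} {H₁ H₂ : G.Subgraph}
    (h : InternallyDisjoint S H₁ H₂) : InternallyDisjoint S H₂ H₁ :=
  ⟨Set.inter_comm _ _ ▸ h.1, h.2.symm⟩

def IsSTreePacking (G : SimpleGraph V) (S : Set V) (T : ι → G.Subgraph) : Prop :=
  (∀ i, IsSTree G S (T i)) ∧ Pairwise fun i j ↦ InternallyDisjoint S (T i) (T j)

lemma treeConn_eq_sSup (G : SimpleGraph V) (S : Set V) :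
    treeConn G S = sSup {r | ∃ T : Fin r → G.Subgraph, IsSTreePacking G S T} :=
  rfl

lemma IsSTreePacking.comp {G : SimpleGraph V} {S : Set V} {T : ι → G.Subgraph}
    (hT : IsSTreePacking G S T) {f : κ → ι} (hf : Function.Injective f) :
    IsSTreePacking G S (T ∘ f) :=
  ⟨fun i ↦ hT.1 (f i), fun _ _ hij ↦ hT.2 (hf.ne hij)⟩

section UpperBound

variable [Fintype V] {G : SimpleGraph V} {S : Finset V} {T : ι → G.Subgraph}

lemma IsSTreePacking.card_not_subset_le (hT : IsSTreePacking G S T) :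
    Nat.card {i // ¬ (T i).verts ⊆ S} ≤ Fintype.card V - S.card := by
  classical
  choose w hwT hwS using fun i : {i // ¬ (T i).verts ⊆ S} ↦ Set.not_subset.mp i.2
  have hw : Function.Injective
      fun i ↦ (⟨w i, Finset.mem_compl.mpr (hwS i)⟩ : ↥(Sᶜ : Finset V)) := by
    intro i j hij
    replace hij : w i = w j := congrArg Subtype.val hij
    by_contra hne
    have hmem : w i ∈ (T i).verts ∩ (T j).verts := ⟨hwT i, hij ▸ hwT j⟩
    rw [(hT.2 (Subtype.coe_injective.ne hne)).1] at hmem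
    exact hwS i hmem
  simpa [Finset.card_compl] using Nat.card_le_card_of_injective _ hw

lemma IsSTreePacking.card_subset_mul_le [Finite ι] (hT : IsSTreePacking G S T) :
    Nat.card {i // (T i).verts ⊆ S} * (S.card - 1) ≤ S.card.choose 2 := by
  have hverts (j : {i // (T i).verts ⊆ S}) : (T j).verts = S := j.2.antisymm (hT.1 j).1
  have hcard (j : {i // (T i).verts ⊆ S}) : (T j).edgeSet.ncard = S.card - 1 := by
    have := (T j).ncard_edgeSet_add_one_of_isTree (hT.1 j).2
    rw [hverts, Set.ncard_coe_finset] at this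
    omega
  have hsub (j : {i // (T i).verts ⊆ S}) :
      (T j).edgeSet ⊆ ((⊤ : G.Subgraph).induce S).edgeSet := by
    simpa [hverts] using Subgraph.edgeSet_mono (Subgraph.le_induce_top_verts (G' := T j))
  have := Fintype.ofFinite {i // (T i).verts ⊆ S}
  calc Nat.card {i // (T i).verts ⊆ S} * (S.card - 1)
      = ∑ᶠ j : {i // (T i).verts ⊆ S}, (T j).edgeSet.ncard := by
        simp [finsum_congr hcard, finsum_eq_sum_of_fintype, Nat.card_eq_fintype_card]
    _ = (⋃ j : {i // (T i).verts ⊆ S}, (T j).edgeSet).ncard :=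
        (Set.ncard_iUnion_of_finite (fun _ ↦ Set.toFinite _)
          fun _ _ hij ↦ (hT.2 (Subtype.coe_injective.ne hij)).2).symm
    _ ≤ ((⊤ : G.Subgraph).induce S).edgeSet.ncard := Set.ncard_le_ncard (Set.iUnion_subset hsub)
    _ ≤ S.card.choose 2 := by
        simpa using ((⊤ : G.Subgraph).induce S).ncard_edgeSet_le_choose_two

lemma IsSTreePacking.card_le [Finite ι] (hT : IsSTreePacking G S T) (hS : 2 ≤ S.card) :
    Nat.card ι ≤ Fintype.card V - S.card + S.card / 2 := by
  classical
  have hsplit : Nat.card ι =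
      Nat.card {i // (T i).verts ⊆ S} + Nat.card {i // ¬ (T i).verts ⊆ S} := by
    rw [← Nat.card_sum, Nat.card_congr (Equiv.sumCompl _)]
  have hinner : Nat.card {i // (T i).verts ⊆ S} ≤ S.card / 2 := by
    have h := (Nat.le_div_iff_mul_le two_pos).mp (Nat.choose_two_right _ ▸ hT.card_subset_mul_le)
    have h2 : 2 * Nat.card {i // (T i).verts ⊆ S} * (S.card - 1) ≤ S.card * (S.card - 1) := by
      linarith
    have := Nat.le_of_mul_le_mul_right h2 (by omega)
    omega
  have := hT.card_not_subset_le
  omega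

end UpperBound

theorem exists_isSTreePacking_top [Fintype V] [DecidableEq V] (S : Finset V) :
    ∃ T : ↥(Sᶜ : Finset V) ⊕ Fin (S.card / 2) → (⊤ : SimpleGraph V).Subgraph,
      IsSTreePacking ⊤ S T := by
  obtain ⟨P, hP, hPdisj⟩ := exists_edgeDisjoint_trees_with_verts_eq S
  let star (v : ↥(Sᶜ : Finset V)) : (⊤ : SimpleGraph V).Subgraph :=
    starSubgraph (⟨v, Set.mem_insert _ _⟩ : ↥(insert (v : V) (S : Set V)))
  have hstar_verts (v) : (star v).verts = insert (v : V) (S : Set V) := starSubgraph_verts _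
  have hnotMem (v : ↥(Sᶜ : Finset V)) : (v : V) ∉ (S : Set V) := Finset.mem_compl.mp v.2
  have star_path (v i) : InternallyDisjoint S (star v) (P i) :=
    ⟨by rw [hstar_verts, (hP i).1, Set.insert_inter_of_notMem (hnotMem v), Set.inter_self],
      Subgraph.disjoint_edgeSet_of_forall_mem (fun _ ↦ mem_of_mem_edgeSet_starSubgraph _)
        ((hP i).1 ▸ hnotMem v)⟩
  have star_star (v w) (hvw : v ≠ w) : InternallyDisjoint S (star v) (star w) := by
    have hv : (v : V) ∉ insert (w : V) (S : Set V) := by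
      simpa [hnotMem v] using Subtype.coe_injective.ne hvw
    refine ⟨?_, Subgraph.disjoint_edgeSet_of_forall_mem
      (fun _ ↦ mem_of_mem_edgeSet_starSubgraph _) (hstar_verts w ▸ hv)⟩
    rw [hstar_verts, hstar_verts, Set.insert_inter_of_notMem hv,
      Set.inter_eq_left.mpr (Set.subset_insert _ _)]
  have path_path (i j) (hij : i ≠ j) : InternallyDisjoint S (P i) (P j) :=
    ⟨by rw [(hP i).1, (hP j).1, Set.inter_self], hPdisj hij⟩
  refine ⟨Sum.elim star P, ?_, ?_⟩
  · rintro (v | i)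
    · exact ⟨(hstar_verts v).symm ▸ Set.subset_insert _ _, isTree_coe_starSubgraph _⟩
    · exact ⟨(hP i).1.ge, (hP i).2⟩
  · rintro (v | i) (w | j) hne
    · exact star_star v w (fun h ↦ hne (congrArg Sum.inl h))
    · exact star_path v j
    · exact (star_path w i).symm
    · exact path_path i j fun h ↦ hne (congrArg Sum.inr h)

theorem treeConn_top [Fintype V] [DecidableEq V] (S : Finset V) (hS : 2 ≤ S.card) :
    treeConn (⊤ : SimpleGraph V) S = Fintype.card V - S.card + S.card / 2 := by
  rw [treeConn_eq_sSup]
  refine IsGreatest.csSup_eq ⟨?_, ?_⟩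
  · obtain ⟨T, hT⟩ := exists_isSTreePacking_top S
    have hcard : Fintype.card (↥(Sᶜ : Finset V) ⊕ Fin (S.card / 2)) =
        Fintype.card V - S.card + S.card / 2 := by
      simp
    let e := (Fintype.equivFinOfCardEq hcard).symm
    exact ⟨T ∘ e, hT.comp e.injective⟩
  · rintro r ⟨T, hT⟩
    simpa using hT.card_le hS

theorem stmt1 (n k : ℕ) (hk2 : 2 ≤ k) (hkn : k ≤ n) :
    gkConn (⊤ : SimpleGraph (Fin n)) k = n - (k + 1) / 2 := by
  have hconst :
      {r | ∃ S : Finset (Fin n), S.card = k ∧ treeConn (⊤ : SimpleGraph (Fin n)) ↑S = r} =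
        {n - k + k / 2} := by
    ext r
    constructor
    · rintro ⟨S, rfl, rfl⟩
      simpa using treeConn_top S hk2
    · rintro rfl
      obtain ⟨S, -, hS⟩ :=
        Finset.exists_subset_card_eq (s := (Finset.univ : Finset (Fin n))) (by simpa using hkn)
      exact ⟨S, hS, by simpa [hS] using treeConn_top S (hS ▸ hk2)⟩
  rw [gkConn, hconst, csInf_singleton]
  omega
end

section
/- Let a ≤ b be positive integers and k an integer with 2 ≤ k ≤ a+b. If k ≤ b − a + 2, then κ_k(K_{a,b}) = a. -/
open SimpleGraph

variable {V : Type*}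

/-!
Every `S`-tree uses an edge at each vertex of `S` (as `|S| ≥ 2`), and internally disjoint trees
use different ones, so `κ(S)` is at most the degree of any vertex of `S`. A `k`-set containing a
vertex of the side `B` of size `b` therefore gives `κ_k(K_{a,b}) ≤ a`.

Conversely, for every `k`-set `S` there is one tree per vertex `x` of the side `A`: join `x` to
all of `S ∩ B`, and if `S ∩ A` has a vertex other than `x`, add a private vertex `y_x ∈ B \ S`
joined to `x` and to the rest of `S ∩ A`. These trees meet exactly in `S` and share no edge.
Private vertices are needed for at most `a` hubs, and for at most `a - 1` when `|S ∩ A| = 1`,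
while `|B \ S| = b - k + |S ∩ A|`; the hypothesis `k ≤ b - a + 2` makes exactly enough of them
available.
-/

open Finset

namespace SimpleGraph

theorem isTree_fromRel_parent {W : Type*} [Finite W] {p : W → W} {rank : W → ℕ} {r : W}
    (hpr : p r = r) (hrank : ∀ v, v ≠ r → rank (p v) < rank v) :
    (fromRel fun v w => w = p v).IsTree := by
  set H := fromRel fun v w : W => w = p v
  have hadj : ∀ v, v ≠ r → H.Adj v (p v) :=
    fun v hv => ⟨fun h => (hrank v hv).ne (congrArg rank h.symm), Or.inl rfl⟩
  have hreach : ∀ v, H.Reachable r v := by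
    intro v
    induction hn : rank v using Nat.strong_induction_on generalizing v with
    | _ n ih =>
      by_cases hv : v = r
      · rw [hv]
      · exact (ih _ (hn ▸ hrank v hv) _ rfl).trans (hadj v hv).reachable.symm
  -- A `p`-orbit of length two would decrease `rank` twice, so `edgeOf` is injective.
  let edgeOf : {v // v ≠ r} → H.edgeSet := fun v => ⟨s(v, p v), hadj v v.2⟩
  have hbij : Function.Bijective edgeOf := by
    constructor
    · rintro ⟨v, hv⟩ ⟨w, hw⟩ h
      rcases Sym2.eq_iff.mp (congrArg Subtype.val h) with ⟨hvw, -⟩ | ⟨rfl, hwv⟩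
      · exact Subtype.ext hvw
      · have h₁ := hrank _ hv
        have h₂ := hrank w hw
        simp only [hwv] at h₁
        omega
    · rintro ⟨e, he⟩
      induction e using Sym2.ind with
      | _ v w =>
        obtain ⟨hvw, rfl | rfl⟩ := (mem_edgeSet _).mp he
        · exact ⟨⟨v, by rintro rfl; exact hvw hpr.symm⟩, rfl⟩
        · exact ⟨⟨w, by rintro rfl; exact hvw hpr⟩, Subtype.ext Sym2.eq_swap⟩
  have := Fintype.ofFinite W
  classical
  rw [isTree_iff_connected_and_card, ← Nat.card_eq_of_bijective edgeOf hbij]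
  refine ⟨(connected_iff_exists_forall_reachable _).mpr ⟨r, hreach⟩, ?_⟩
  have := Fintype.card_pos_iff.mpr ⟨r⟩
  simp only [Nat.card_eq_fintype_card, Fintype.card_subtype_compl, Fintype.card_unique]
  omega

def Subgraph.ofParent (G : SimpleGraph V) (W : Set V) (p : V → V) (hW : Set.MapsTo p W W)
    (hG : ∀ v ∈ W, p v ≠ v → G.Adj v (p v)) : G.Subgraph where
  verts := W
  Adj := (fromRel fun v w => v ∈ W ∧ w = p v).Adj
  adj_sub := by
    rintro v w ⟨hne, ⟨hv, rfl⟩ | ⟨hw, rfl⟩⟩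
    exacts [hG v hv hne.symm, (hG w hw hne).symm]
  edge_vert := by
    rintro v w ⟨-, ⟨hv, -⟩ | ⟨hw, rfl⟩⟩
    exacts [hv, hW hw]
  symm := (fromRel _).symm

variable {G : SimpleGraph V} {W : Set V} {p : V → V}

theorem Subgraph.ofParent_isTree [Finite W] (hW : Set.MapsTo p W W)
    (hG : ∀ v ∈ W, p v ≠ v → G.Adj v (p v)) {rank : V → ℕ} {r : V} (hr : r ∈ W)
    (hpr : p r = r) (hrank : ∀ v ∈ W, v ≠ r → rank (p v) < rank v) :
    (Subgraph.ofParent G W p hW hG).coe.IsTree := by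
  have hcoe :
      (Subgraph.ofParent G W p hW hG).coe = fromRel fun v w => w = hW.restrict p W W v := by
    ext ⟨v, hv : v ∈ W⟩ ⟨w, hw : w ∈ W⟩
    simp [Subgraph.ofParent, Subtype.ext_iff, hv, hw]
  have : Finite (Subgraph.ofParent G W p hW hG).verts := ‹Finite W›
  rw [hcoe]
  exact isTree_fromRel_parent (rank := rank ∘ Subtype.val) (r := ⟨r, hr⟩)
    (Subtype.ext hpr) fun v hv => hrank v v.2 (Subtype.coe_ne_coe.mpr hv)

end SimpleGraph

section TreePacking

variable {G : SimpleGraph V} {S : Set V} {r : ℕ}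

def HasTreePacking (G : SimpleGraph V) (S : Set V) (r : ℕ) : Prop :=
  ∃ T : Fin r → G.Subgraph, (∀ i, IsSTree G S (T i)) ∧ PairwiseInternallyDisjoint G S T

theorem hasTreePacking_zero : HasTreePacking G S 0 :=
  ⟨Fin.elim0, fun i => i.elim0, fun i => i.elim0⟩

theorem IsSTree.exists_adj {T : G.Subgraph} (hT : IsSTree G S T) {v w : V} (hv : v ∈ S)
    (hw : w ∈ S) (hvw : v ≠ w) : ∃ z, T.Adj v z := by
  obtain ⟨p⟩ := hT.2.connected.preconnected ⟨v, hT.1 hv⟩ ⟨w, hT.1 hw⟩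
  cases p with
  | nil => exact absurd rfl hvw
  | cons h _ => exact ⟨_, h⟩

theorem HasTreePacking.le_degree (hr : HasTreePacking G S r) (hS : S.Nontrivial) {v : V}
    [Fintype (G.neighborSet v)] (hv : v ∈ S) : r ≤ G.degree v := by
  obtain ⟨T, hT, hdisj⟩ := hr
  obtain ⟨w, hw, hwv⟩ := hS.exists_ne v
  choose z hz using fun i => (hT i).exists_adj hv hw hwv.symm
  have hinj : Function.Injective fun i => (⟨z i, (T i).adj_sub (hz i)⟩ : G.neighborSet v) := by
    intro i j hij
    by_contra hne
    refine Set.disjoint_left.mp (hdisj i j hne).2 (Subgraph.mem_edgeSet.mpr (hz i)) ?_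
    rw [show z i = z j from congrArg Subtype.val hij]
    exact Subgraph.mem_edgeSet.mpr (hz j)
  rw [← card_neighborSet_eq_degree]
  simpa only [Fintype.card_fin] using Fintype.card_le_of_injective _ hinj

theorem treeConn_le_degree (hS : S.Nontrivial) {v : V} [Fintype (G.neighborSet v)]
    (hv : v ∈ S) : treeConn G S ≤ G.degree v :=
  csSup_le ⟨0, hasTreePacking_zero⟩ fun _ hr => HasTreePacking.le_degree hr hS hv

theorem HasTreePacking.le_treeConn [G.LocallyFinite] (hr : HasTreePacking G S r)
    (hS : S.Nontrivial) : r ≤ treeConn G S := by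
  obtain ⟨v, hv⟩ := hS.nonempty
  exact le_csSup ⟨G.degree v, fun _ hr' => HasTreePacking.le_degree hr' hS hv⟩ hr

theorem gkConn_eq_of_forall_le {k n : ℕ} (hle : ∀ S : Finset V, #S = k → n ≤ treeConn G S)
    (hex : ∃ S : Finset V, #S = k ∧ treeConn G S ≤ n) : gkConn G k = n := by
  obtain ⟨S₀, hS₀, hS₀n⟩ := hex
  have hn : n ∈ {r | ∃ S : Finset V, #S = k ∧ treeConn G S = r} :=
    ⟨S₀, hS₀, le_antisymm hS₀n (hle S₀ hS₀)⟩
  exact le_antisymm (Nat.sInf_le hn) (le_csInf ⟨n, hn⟩ fun _ ⟨S, hS, hSr⟩ => hSr ▸ hle S hS)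

end TreePacking

section CompleteBipartite

variable {α β : Type*}

theorem degree_completeBipartiteGraph_inr [Fintype α] (w : β)
    [Fintype ((completeBipartiteGraph α β).neighborSet (.inr w))] :
    (completeBipartiteGraph α β).degree (.inr w) = Fintype.card α := by
  have : (completeBipartiteGraph α β).neighborSet (.inr w) = Set.range Sum.inl := by
    ext (u | w') <;> simp
  rw [← card_neighborSet_eq_degree, Fintype.card_eq_nat_card, this,
    Nat.card_range_of_injective Sum.inl_injective, Nat.card_eq_fintype_card]

variable [DecidableEq α] {S : Set (α ⊕ β)} {x : α} {y : β}

def hubParent (x : α) (y : β) : α ⊕ β → α ⊕ β :=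
  Sum.elim (fun u => if u = x then .inl x else .inr y) fun _ => .inl x

def privateHubs (S : Set (α ⊕ β)) : Set α :=
  {x | ∃ u, .inl u ∈ S ∧ u ≠ x}

theorem hubParent_hubParent (v : α ⊕ β) : hubParent x y (hubParent x y v) = .inl x := by
  rcases v with u | w
  · by_cases hu : u = x <;> simp [hubParent, hu]
  · simp [hubParent]

theorem completeBipartiteGraph_adj_hubParent {v : α ⊕ β} (hv : hubParent x y v ≠ v) :
    (completeBipartiteGraph α β).Adj v (hubParent x y v) := by
  rcases v with u | w
  · by_cases hu : u = x <;> simp_all [hubParent]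
  · simp [hubParent]

theorem mapsTo_hubParent :
    Set.MapsTo (hubParent x y) (insert (.inl x) (S ∪ hubParent x y '' S))
      (insert (.inl x) (S ∪ hubParent x y '' S)) := by
  rintro v (rfl | hv | ⟨s, -, rfl⟩)
  · exact Or.inl (by simp [hubParent])
  · exact Or.inr (Or.inr ⟨v, hv, rfl⟩)
  · exact Or.inl (hubParent_hubParent s)

-- The private vertex `inr y` enters the tree exactly when some `inl u ∈ S` with `u ≠ x` points to
-- it, i.e. when `x ∈ privateHubs S`.
def hubTree (S : Set (α ⊕ β)) (x : α) (y : β) : (completeBipartiteGraph α β).Subgraph :=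
  Subgraph.ofParent _ (insert (.inl x) (S ∪ hubParent x y '' S)) (hubParent x y)
    mapsTo_hubParent fun _ _ => completeBipartiteGraph_adj_hubParent

theorem hubTree_isSTree [Finite α] [Finite β] :
    IsSTree (completeBipartiteGraph α β) S (hubTree S x y) := by
  refine ⟨fun v hv => Or.inr (Or.inl hv), Subgraph.ofParent_isTree _ _
    (rank := Sum.elim (fun u => if u = x then 0 else 2) fun _ => 1)
    (Set.mem_insert _ _) (by simp [hubParent]) ?_⟩
  rintro (u | w) - hv
  · have hu : u ≠ x := fun h => hv (h ▸ rfl)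
    simp [hubParent, hu]
  · simp [hubParent]

theorem mem_hubTree_verts {v : α ⊕ β} (hv : v ∈ (hubTree S x y).verts) :
    v ∈ S ∨ v = .inl x ∨ (v = .inr y ∧ x ∈ privateHubs S) := by
  rcases hv with rfl | hv | ⟨(u | w), hs, rfl⟩
  · exact Or.inr (Or.inl rfl)
  · exact Or.inl hv
  · by_cases hu : u = x
    · simp [hubParent, hu]
    · exact Or.inr (Or.inr ⟨by simp [hubParent, hu], u, hs, hu⟩)
  · simp [hubParent]

theorem hubTree_adj_of_mem (hy : x ∈ privateHubs S → .inr y ∉ S) {v w : α ⊕ β}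
    (hvw : (hubTree S x y).Adj v w) (hv : v ∈ S) (hw : w ∈ S) : v = .inl x ∨ w = .inl x := by
  have key : ∀ v, v ∈ S → hubParent x y v ∈ S → v = .inl x ∨ hubParent x y v = .inl x := by
    rintro (u | w) hu hpu
    · by_cases hux : u = x
      · simp [hux]
      · simp only [hubParent, Sum.elim_inl, hux, if_false] at hpu
        exact absurd hpu (hy ⟨u, hu, hux⟩)
    · simp [hubParent]
  obtain ⟨-, ⟨-, rfl⟩ | ⟨-, rfl⟩⟩ := hvw
  · exact key v hv hw
  · exact (key w hw hv).symm

theorem hubTree_internallyDisjoint {y : α → β}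
    (hyS : Set.MapsTo y (privateHubs S) {w | .inr w ∉ S}) (hyinj : Set.InjOn y (privateHubs S))
    {x x' : α} (hxx : x ≠ x') :
    (hubTree S x (y x)).verts ∩ (hubTree S x' (y x')).verts = S ∧
      Disjoint (hubTree S x (y x)).edgeSet (hubTree S x' (y x')).edgeSet := by
  have hverts : (hubTree S x (y x)).verts ∩ (hubTree S x' (y x')).verts = S := by
    refine subset_antisymm ?_ fun v hv => ⟨Or.inr (Or.inl hv), Or.inr (Or.inl hv)⟩
    rintro v ⟨hv, hv'⟩
    rcases mem_hubTree_verts hv with hS | rfl | ⟨rfl, hx⟩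
    · exact hS
    all_goals rcases mem_hubTree_verts hv' with hS' | h' | ⟨h', hx'⟩
    all_goals first | exact hS' | simp_all
    exact absurd (hyinj hx hx' h') hxx
  refine ⟨hverts, Set.disjoint_left.mpr ?_⟩
  rintro e he he'
  induction e using Sym2.ind with
  | _ v w =>
    rw [Subgraph.mem_edgeSet] at he he'
    have hv : v ∈ S := hverts ▸ ⟨(hubTree _ _ _).edge_vert he, (hubTree _ _ _).edge_vert he'⟩
    have hw : w ∈ S :=
      hverts ▸ ⟨(hubTree _ _ _).edge_vert he.symm, (hubTree _ _ _).edge_vert he'.symm⟩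
    have hG := (hubTree S x (y x)).adj_sub he
    rcases hubTree_adj_of_mem (fun hx => hyS hx) he hv hw with rfl | rfl <;>
      rcases hubTree_adj_of_mem (fun hx => hyS hx) he' hv hw with h | h <;>
      simp_all

theorem encard_privateHubs_le [Fintype α] [Fintype β] [DecidableEq β] {S : Finset (α ⊕ β)}
    (hS : #S + Fintype.card α ≤ Fintype.card β + 2) :
    (privateHubs (S : Set (α ⊕ β))).encard ≤ {w : β | .inr w ∉ S}.encard := by
  have hfree : {w : β | .inr w ∉ S} = ((S.toRight)ᶜ : Finset β) := by ext; simp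
  have hsplit := card_toLeft_add_card_toRight (u := S)
  have hright : #S.toRight ≤ Fintype.card β := card_le_univ _
  rw [hfree, Set.encard_coe_eq_coe_finsetCard, card_compl]
  rcases S.toLeft.eq_empty_or_nonempty with hempty | hne
  · have : privateHubs (S : Set (α ⊕ β)) = ∅ := by
      ext x
      simp [privateHubs, ← mem_toLeft, hempty]
    simp [this]
  rcases hne.exists_eq_singleton_or_nontrivial with ⟨u, hu⟩ | hnt
  · have hsub : privateHubs (S : Set (α ⊕ β)) ⊆ (({u}ᶜ : Finset α) : Set α) := by
      rintro x ⟨u', hu', hux⟩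
      have : u' = u := by simpa [hu] using (mem_toLeft (u := S)).mpr hu'
      simpa [this, eq_comm] using hux
    refine (Set.encard_le_encard hsub).trans ?_
    rw [Set.encard_coe_eq_coe_finsetCard, card_compl, Nat.cast_le]
    simp only [hu, card_singleton] at hsplit ⊢
    omega
  · have := one_lt_card_iff_nontrivial.mpr hnt
    refine Set.encard_le_card.trans ?_
    rw [ENat.card_eq_coe_fintype_card, Nat.cast_le]
    omega

theorem hasTreePacking_completeBipartiteGraph [Fintype α] [Fintype β] [Nonempty β]
    (S : Finset (α ⊕ β)) (hS : #S + Fintype.card α ≤ Fintype.card β + 2) :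
    HasTreePacking (completeBipartiteGraph α β) S (Fintype.card α) := by
  classical
  obtain ⟨y, hyS, hyinj⟩ := (Set.toFinite _).exists_injOn_of_encard_le (encard_privateHubs_le hS)
  let e := Fintype.equivFin α
  exact ⟨fun i => hubTree S (e.symm i) (y (e.symm i)), fun _ => hubTree_isSTree,
    fun _ _ hij => hubTree_internallyDisjoint hyS hyinj (e.symm.injective.ne hij)⟩

end CompleteBipartite

theorem stmt2_general (a b k : ℕ) (hab : a ≤ b)
    (hk2 : 2 ≤ k) (hkab : k ≤ a + b) (h : k ≤ b - a + 2) :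
    gkConn (completeBipartiteGraph (Fin a) (Fin b)) k = a := by
  classical
  have : NeZero b := ⟨by omega⟩
  refine gkConn_eq_of_forall_le (fun S hS => ?_) ?_
  · simpa using (hasTreePacking_completeBipartiteGraph S (by simp; omega)).le_treeConn
      (one_lt_card_iff_nontrivial.mp (by omega))
  · obtain ⟨S, hsub, -, hS⟩ := exists_subsuperset_card_eq (n := k)
      (subset_univ ({.inr 0} : Finset (Fin a ⊕ Fin b))) (by simp; omega) (by simp; omega)
    refine ⟨S, hS, ?_⟩
    simpa [degree_completeBipartiteGraph_inr] using
      treeConn_le_degree (G := completeBipartiteGraph (Fin a) (Fin b))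
        (one_lt_card_iff_nontrivial.mp (by omega)) (hsub (mem_singleton_self _))

theorem stmt2 (a b k : ℕ) (ha : 1 ≤ a) (hab : a ≤ b)
    (hk2 : 2 ≤ k) (hkab : k ≤ a + b) (h : k ≤ b - a + 2) :
    gkConn (completeBipartiteGraph (Fin a) (Fin b)) k = a :=
  stmt2_general a b k hab hk2 hkab h
end

section
/- Let G be a connected graph with at least three vertices. If G has two adjacent vertices each of minimum degree δ(G), then κ_3(G) ≤ δ(G) − 1. -/
/-!
Let `u v` be adjacent vertices of minimum degree `δ` and `w` any third vertex. A `{u, v, w}`-tree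
must use an edge at `u` and a different edge at `v`, since otherwise its only edge at `u` or `v`
would be `uv` and `{u, v}` would be cut off from `w`. Edge-disjoint trees therefore use pairwise
disjoint pairs of edges out of the `2δ - 1` edges meeting `u` or `v`, so there are at most `δ - 1`
of them.
-/

open SimpleGraph

variable {V : Type*}

open Finset

namespace SimpleGraph

theorem Preconnected.exists_adj_adj_ne {H : SimpleGraph V} (hH : H.Preconnected)
    {u v w : V} (huv : u ≠ v) (huw : u ≠ w) (hvw : v ≠ w) :
    ∃ x y, H.Adj u x ∧ H.Adj v y ∧ s(u, x) ≠ s(v, y) := by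
  obtain ⟨p⟩ := hH u w
  obtain ⟨d, -, hfst, hsnd⟩ := p.exists_boundary_dart {u, v} (by simp) (by simp [huw.symm, hvw.symm])
  obtain ⟨x, hux, -⟩ := (hH u v).some.exists_eq_cons_of_ne huv
  obtain ⟨y, hvy, -⟩ := (hH v u).some.exists_eq_cons_of_ne huv.symm
  simp only [Set.mem_insert_iff, Set.mem_singleton_iff, not_or] at hfst hsnd
  rcases hfst with hdu | hdv
  · refine ⟨d.snd, y, hdu ▸ d.adj, hvy, fun h => ?_⟩
    have : v ∈ s(u, d.snd) := h ▸ Sym2.mem_mk_left v y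
    simp_all
  · refine ⟨x, d.snd, hux, hdv ▸ d.adj, fun h => ?_⟩
    have : u ∈ s(v, d.snd) := h ▸ Sym2.mem_mk_left u x
    simp_all

theorem Subgraph.exists_adj_adj_ne {G : SimpleGraph V} {T : G.Subgraph}
    (hT : T.coe.Preconnected) {u v w : V} (hu : u ∈ T.verts) (hv : v ∈ T.verts)
    (hw : w ∈ T.verts) (huv : u ≠ v) (huw : u ≠ w) (hvw : v ≠ w) :
    ∃ x y, T.Adj u x ∧ T.Adj v y ∧ s(u, x) ≠ s(v, y) := by
  obtain ⟨x, y, hux, hvy, hne⟩ := hT.exists_adj_adj_ne (u := ⟨u, hu⟩) (v := ⟨v, hv⟩)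
    (w := ⟨w, hw⟩) (by simpa) (by simpa) (by simpa)
  refine ⟨x, y, hux, hvy, fun h => hne ?_⟩
  apply Sym2.map.injective Subtype.val_injective
  simpa using h

theorem card_incidenceFinset_union_add_one_of_adj [Fintype V] [DecidableEq V]
    {G : SimpleGraph V} [DecidableRel G.Adj] {u v : V} (huv : G.Adj u v) :
    #(G.incidenceFinset u ∪ G.incidenceFinset v) + 1 = G.degree u + G.degree v := by
  have hinter : G.incidenceFinset u ∩ G.incidenceFinset v = {s(u, v)} := by
    rw [← coe_inj]
    push_cast
    exact G.incidenceSet_inter_incidenceSet_of_adj huv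
  rw [← card_incidenceFinset_eq_degree, ← card_incidenceFinset_eq_degree,
    ← card_union_add_card_inter, hinter, card_singleton]

end SimpleGraph

theorem Finset.mul_le_card_of_pairwiseDisjoint {α ι : Type*} [DecidableEq α] {s : Finset ι}
    {A : Finset α} {F : ι → Finset α} {k : ℕ} (hF : (s : Set ι).PairwiseDisjoint F)
    (hsub : ∀ i ∈ s, F i ⊆ A) (hk : ∀ i ∈ s, k ≤ #(F i)) : #s * k ≤ #A :=
  calc #s * k = ∑ _i ∈ s, k := by rw [sum_const, smul_eq_mul]
    _ ≤ ∑ i ∈ s, #(F i) := sum_le_sum hk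
    _ = #(s.biUnion F) := (card_biUnion hF).symm
    _ ≤ #A := card_le_card (biUnion_subset.2 hsub)

theorem PairwiseInternallyDisjoint.two_mul_lt_degree_add_degree [Fintype V]
    {G : SimpleGraph V} [DecidableRel G.Adj] {S : Set V} {u v w : V} (huv : G.Adj u v)
    (hu : u ∈ S) (hv : v ∈ S) (hw : w ∈ S) (huw : u ≠ w) (hvw : v ≠ w) {r : ℕ}
    {T : Fin r → G.Subgraph} (hT : ∀ i, IsSTree G S (T i))
    (hdisj : PairwiseInternallyDisjoint G S T) :
    2 * r < G.degree u + G.degree v := by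
  classical
  set A := G.incidenceFinset u ∪ G.incidenceFinset v
  have hcount : #(univ : Finset (Fin r)) * 2 ≤ #A := by
    refine mul_le_card_of_pairwiseDisjoint (F := fun i => A.filter (· ∈ (T i).edgeSet))
      (fun i _ j _ hij => ?_) (fun i _ => filter_subset _ _) (fun i _ => ?_)
    · exact disjoint_filter_filter' _ _ ((hdisj i j hij).2)
    · obtain ⟨x, y, hux, hvy, hne⟩ := Subgraph.exists_adj_adj_ne
        (hT i).2.connected.preconnected ((hT i).1 hu) ((hT i).1 hv) ((hT i).1 hw)
        huv.ne huw hvw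
      refine one_lt_card.2 ⟨s(u, x), ?_, s(v, y), ?_, hne⟩ <;>
        simp [A, hux, hvy, hux.adj_sub, hvy.adj_sub]
  have hA : #A + 1 = G.degree u + G.degree v := card_incidenceFinset_union_add_one_of_adj huv
  simp only [card_univ, Fintype.card_fin] at hcount
  omega

theorem two_mul_treeConn_lt_degree_add_degree [Fintype V] {G : SimpleGraph V}
    [DecidableRel G.Adj] {S : Set V} {u v w : V} (huv : G.Adj u v) (hu : u ∈ S) (hv : v ∈ S)
    (hw : w ∈ S) (huw : u ≠ w) (hvw : v ≠ w) :
    2 * treeConn G S < G.degree u + G.degree v := by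
  have hbound : ∀ r ∈ {r | ∃ T : Fin r → G.Subgraph,
      (∀ i, IsSTree G S (T i)) ∧ PairwiseInternallyDisjoint G S T},
      2 * r < G.degree u + G.degree v :=
    fun r ⟨_, hT, hdisj⟩ => hdisj.two_mul_lt_degree_add_degree huv hu hv hw huw hvw hT
  refine hbound _ (Nat.sSup_mem ⟨0, Fin.elim0, fun i => i.elim0, fun i => i.elim0⟩
    ⟨G.degree u + G.degree v, fun r hr => ?_⟩)
  have := hbound r hr
  omega

theorem stmt5_general {V : Type*} [Fintype V] (G : SimpleGraph V)
    [DecidableRel G.Adj] (hcard : 3 ≤ Fintype.card V)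
    (u v : V) (huv : G.Adj u v)
    (hu : G.degree u = G.minDegree) (hv : G.degree v = G.minDegree) :
    gkConn G 3 ≤ G.minDegree - 1 := by
  classical
  obtain ⟨w, -, hw⟩ := exists_mem_notMem_of_card_lt_card (s := {u, v}) (t := univ)
    (by rw [card_univ]; exact card_le_two.trans_lt hcard)
  simp only [mem_insert, mem_singleton, not_or] at hw
  have hS : #({u, v, w} : Finset V) = 3 :=
    card_eq_three.2 ⟨u, v, w, huv.ne, Ne.symm hw.1, Ne.symm hw.2, rfl⟩
  have hκ := two_mul_treeConn_lt_degree_add_degree (S := ↑({u, v, w} : Finset V)) huv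
    (by simp) (by simp) (by simp) (Ne.symm hw.1) (Ne.symm hw.2)
  calc gkConn G 3 ≤ treeConn G ↑({u, v, w} : Finset V) := Nat.sInf_le ⟨_, hS, rfl⟩
    _ ≤ G.minDegree - 1 := by omega

theorem stmt5 {V : Type*} [Fintype V] [DecidableEq V] (G : SimpleGraph V)
    [DecidableRel G.Adj] (hconn : G.Connected) (hcard : 3 ≤ Fintype.card V)
    (u v : V) (huv : G.Adj u v)
    (hu : G.degree u = G.minDegree) (hv : G.degree v = G.minDegree) :
    gkConn G 3 ≤ G.minDegree - 1 :=
  stmt5_general G hcard u v huv hu hv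
end

section
/- For every connected graph G with at least three vertices, κ_3(G) ≤ κ(G), where κ(G) is the vertex connectivity of G. -/
open SimpleGraph

variable {V : Type*}

/-!
Let `W` be a minimum vertex cut, `|W| = κ(G)`, and `n = |V|`. If `|W| + 2 < n`, then `G - W` is
disconnected; take `a, b` in different components of `G - W` and a third vertex `z ∉ W`. Every
`{a, b, z}`-tree meets `W`, and internally disjoint trees meet it in distinct vertices, so
`κ({a, b, z}) ≤ |W|`. Otherwise `n - 2 ≤ |W|`, and for any 3-set `S` at most one of a family of
internally disjoint `S`-trees has vertex set `S` (a tree on three vertices uses two of the three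
possible edges), while each of the others owns a private vertex outside `S`; so `κ(S) ≤ n - 2`.
-/

open Finset

namespace SimpleGraph.Subgraph

variable {G : SimpleGraph V}

lemma ncard_verts_le_ncard_edgeSet_add_one {T : G.Subgraph} (hT : T.coe.Connected) :
    T.verts.ncard ≤ T.edgeSet.ncard + 1 := by
  have h := hT.card_vert_le_card_edgeSet_add_one
  rwa [Nat.card_coe_set_eq, Nat.card_coe_set_eq, ← Set.ncard_image_of_injective _
    (Sym2.map.injective Subtype.val_injective), image_coe_edgeSet_coe] at h

lemma edgeSet_subset_image_offDiag [DecidableEq V] {T : G.Subgraph} {S : Finset V}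
    (h : T.verts ⊆ S) : T.edgeSet ⊆ ↑(S.offDiag.image (Function.uncurry Sym2.mk)) := by
  intro e he
  induction e using Sym2.ind with
  | h u v =>
    have huv : T.Adj u v := he
    simp only [coe_image, Set.mem_image, mem_coe, mem_offDiag]
    exact ⟨(u, v), ⟨h huv.fst_mem, h huv.snd_mem, T.adj_sub huv |>.ne⟩, rfl⟩

lemma not_disjoint_edgeSet_of_verts_eq_of_card_eq_three {T₁ T₂ : G.Subgraph} {S : Finset V}
    (hS : S.card = 3) (h₁ : T₁.verts = S) (h₂ : T₂.verts = S)
    (hc₁ : T₁.coe.Connected) (hc₂ : T₂.coe.Connected) :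
    ¬ Disjoint T₁.edgeSet T₂.edgeSet := by
  classical
  intro hdisj
  have hsub : T₁.edgeSet ∪ T₂.edgeSet ⊆ ↑(S.offDiag.image (Function.uncurry Sym2.mk)) :=
    Set.union_subset (edgeSet_subset_image_offDiag h₁.le) (edgeSet_subset_image_offDiag h₂.le)
  have hfin := Finset.finite_toSet (S.offDiag.image (Function.uncurry Sym2.mk))
  have hle := Set.ncard_le_ncard hsub hfin
  rw [Set.ncard_union_eq hdisj (hfin.subset (Set.subset_union_left.trans hsub))
    (hfin.subset (Set.subset_union_right.trans hsub)), Set.ncard_coe_finset,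
    Sym2.card_image_offDiag, hS] at hle
  have e₁ := ncard_verts_le_ncard_edgeSet_add_one hc₁
  have e₂ := ncard_verts_le_ncard_edgeSet_add_one hc₂
  rw [h₁, Set.ncard_coe_finset, hS] at e₁
  rw [h₂, Set.ncard_coe_finset, hS] at e₂
  norm_num at hle
  omega

lemma exists_mem_verts_of_not_reachable {W : Set V}
    {a b : ((⊤ : G.Subgraph).deleteVerts W).verts}
    (hab : ¬ ((⊤ : G.Subgraph).deleteVerts W).coe.Reachable a b) {T : G.Subgraph}
    (hT : T.coe.Connected) (ha : a.1 ∈ T.verts) (hb : b.1 ∈ T.verts) :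
    ∃ w ∈ W, w ∈ T.verts := by
  by_contra! hW
  have hle : T ≤ (⊤ : G.Subgraph).deleteVerts W :=
    ⟨fun v hv => ⟨trivial, fun hvW => hW v hvW hv⟩, fun u v huv => deleteVerts_adj.mpr
      ⟨trivial, fun huW => hW u huW huv.fst_mem, trivial, fun hvW => hW v hvW huv.snd_mem,
        T.adj_sub huv⟩⟩
  exact hab ((hT.preconnected ⟨a, ha⟩ ⟨b, hb⟩).map (inclusion hle))

end SimpleGraph.Subgraph

section TreeConnectivity

variable {G : SimpleGraph V}

lemma PairwiseInternallyDisjoint.card_le {S : Set V} {r : ℕ} {T : Fin r → G.Subgraph}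
    (hT : PairwiseInternallyDisjoint G S T) {I : Finset (Fin r)} {A : Finset V}
    (hA : Disjoint (A : Set V) S) (hmeet : ∀ i ∈ I, ∃ v ∈ A, v ∈ (T i).verts) :
    I.card ≤ A.card := by
  refine card_le_card_of_forall_subsingleton (fun i v => v ∈ (T i).verts) hmeet
    fun v hv i ⟨_, hi⟩ j ⟨_, hj⟩ => by_contra fun hne => ?_
  have hS : v ∈ S := (hT i j hne).1 ▸ ⟨hi, hj⟩
  exact Set.disjoint_left.mp hA hv hS

lemma treeConn_le_of_forall {S : Set V} {m : ℕ}
    (h : ∀ r (T : Fin r → G.Subgraph), (∀ i, IsSTree G S (T i)) →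
      PairwiseInternallyDisjoint G S T → r ≤ m) :
    treeConn G S ≤ m :=
  csSup_le' fun _ ⟨T, hT, hdisj⟩ => h _ T hT hdisj

lemma gkConn_le_treeConn {k : ℕ} {S : Finset V} (hS : S.card = k) :
    gkConn G k ≤ treeConn G S :=
  Nat.sInf_le ⟨S, hS, rfl⟩

lemma treeConn_le_card_of_forall_exists_mem {S : Set V} {A : Finset V}
    (hA : Disjoint (A : Set V) S)
    (hmeet : ∀ T : G.Subgraph, IsSTree G S T → ∃ v ∈ A, v ∈ T.verts) :
    treeConn G S ≤ A.card :=
  treeConn_le_of_forall fun r T hT hdisj => by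
    simpa using hdisj.card_le (I := univ) hA fun i _ => hmeet (T i) (hT i)

lemma treeConn_le_card_sub_two [Fintype V] {S : Finset V} (hS : S.card = 3) :
    treeConn G S ≤ Fintype.card V - 2 := by
  classical
  refine treeConn_le_of_forall fun r T hT hdisj => ?_
  have hI : (univ.filter fun i => ¬ (T i).verts ⊆ S).card ≤ Fintype.card V - 3 := by
    have := hdisj.card_le (I := univ.filter fun i => ¬ (T i).verts ⊆ S) (A := Sᶜ)
      (by simp [disjoint_compl_left]) fun i hi => by
      obtain ⟨v, hv, hvS⟩ := Set.not_subset.mp (mem_filter.mp hi).2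
      exact ⟨v, by simpa using hvS, hv⟩
    rwa [card_compl, hS] at this
  have hIc : (univ.filter fun i => (T i).verts ⊆ S).card ≤ 1 := by
    refine card_le_one.mpr fun i hi j hj => by_contra fun hne => ?_
    have hverts : ∀ m, (T m).verts ⊆ S → (T m).verts = S := fun m hm => hm.antisymm (hT m).1
    exact Subgraph.not_disjoint_edgeSet_of_verts_eq_of_card_eq_three hS
      (hverts i (mem_filter.mp hi).2) (hverts j (mem_filter.mp hj).2)
      (hT i).2.connected (hT j).2.connected (hdisj i j hne).2
  have hr := card_filter_add_card_filter_not (s := (univ : Finset (Fin r)))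
    fun i => (T i).verts ⊆ S
  have h3 : 3 ≤ Fintype.card V := hS ▸ card_le_univ S
  simp only [card_univ, Fintype.card_fin] at hr
  omega

lemma exists_treeConn_le_of_not_connected_deleteVerts [Fintype V] {W : Finset V}
    (hW : ¬ ((⊤ : G.Subgraph).deleteVerts W).coe.Connected)
    (hcard : W.card + 2 < Fintype.card V) :
    ∃ S : Finset V, S.card = 3 ∧ treeConn G S ≤ W.card := by
  classical
  obtain ⟨v, -, hv⟩ := exists_mem_notMem_of_card_lt_card (s := W) (t := univ)
    (by rw [card_univ]; omega)
  have : Nonempty ((⊤ : G.Subgraph).deleteVerts W).verts := ⟨⟨v, trivial, hv⟩⟩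
  obtain ⟨a, b, hab⟩ : ∃ a b, ¬ ((⊤ : G.Subgraph).deleteVerts W).coe.Reachable a b := by
    by_contra! h
    exact hW (Connected.mk h)
  have hne : a.1 ≠ b.1 := fun h => hab (Subtype.ext h ▸ Reachable.refl _)
  obtain ⟨z, -, hz⟩ := exists_mem_notMem_of_card_lt_card (s := W ∪ {a.1, b.1}) (t := univ)
    (by rw [card_univ]; grind [card_union_le, card_le_two])
  simp only [mem_union, mem_insert, mem_singleton, not_or] at hz
  refine ⟨{a.1, b.1, z},
    card_eq_three.mpr ⟨a, b, z, hne, Ne.symm hz.2.1, Ne.symm hz.2.2, rfl⟩,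
    treeConn_le_card_of_forall_exists_mem ?_ fun T hT => ?_⟩
  · simp only [coe_insert, coe_singleton, Set.disjoint_left, mem_coe, Set.mem_insert_iff,
      Set.mem_singleton_iff, not_or]
    exact fun w hw =>
      ⟨fun h => a.2.2 (h ▸ hw), fun h => b.2.2 (h ▸ hw), fun h => hz.1 (h ▸ hw)⟩
  · exact Subgraph.exists_mem_verts_of_not_reachable hab hT.2.connected (hT.1 (by simp))
      (hT.1 (by simp))

end TreeConnectivity

lemma exists_card_eq_vertConn [Fintype V] (G : SimpleGraph V) :
    ∃ W : Finset V, W.card = vertConn G ∧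
      (¬ ((⊤ : G.Subgraph).deleteVerts W).coe.Connected ∨ Fintype.card V - W.card ≤ 1) :=
  Nat.sInf_mem (s := {n | ∃ W : Finset V, W.card = n ∧ _}) ⟨_, univ, rfl, Or.inr (by simp)⟩

theorem stmt6_general {V : Type*} [Fintype V] (G : SimpleGraph V)
    (hcard : 3 ≤ Fintype.card V) :
    gkConn G 3 ≤ vertConn G := by
  classical
  obtain ⟨W, hWk, hW⟩ := exists_card_eq_vertConn G
  rw [← hWk]
  by_cases hsmall : Fintype.card V ≤ W.card + 2
  · obtain ⟨S, -, hS⟩ := exists_subset_card_eq (s := univ) (n := 3) (by simpa using hcard)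
    calc gkConn G 3 ≤ treeConn G S := gkConn_le_treeConn hS
      _ ≤ Fintype.card V - 2 := treeConn_le_card_sub_two hS
      _ ≤ W.card := by omega
  · obtain ⟨S, hS, hSW⟩ :=
      exists_treeConn_le_of_not_connected_deleteVerts (hW.resolve_right (by omega)) (by omega)
    exact (gkConn_le_treeConn hS).trans hSW

theorem stmt6 {V : Type*} [Fintype V] (G : SimpleGraph V)
    (hconn : G.Connected) (hcard : 3 ≤ Fintype.card V) :
    gkConn G 3 ≤ vertConn G :=
  stmt6_general G hcard
end
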